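/- Every kernel K of an orientation D of a graph can be decomposed with respect to any clique C as K = S ∪ K_S where S = K ∩ C satisfies |S| ≤ 1, and K_S = K \ C is a kernel of the subdigraph induced by the vertices that are neither in C nor adjacent to any vertex of S. -/
import Mathlib


/-- `K₀` is a kernel of the subdigraph induced by `W`:
`K₀ ⊆ W`, `K₀` is stable in `G`, and `K₀` absorbs `W \ K₀`. -/
def KernelOn {V : Type*} (G : SimpleGraph V) (A : V → V → Prop) (W K₀ : Set V) : Prop :=
  K₀ ⊆ W ∧ (∀ u ∈ K₀, ∀ w ∈ K₀, ¬ G.Adj u w) ∧ (∀ u ∈ W, u ∉ K₀ → ∃ w ∈ K₀, A u w)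

/-- Every kernel `K` of an orientation decomposes with respect to a clique `C` as
`K = (K ∩ C) ∪ (K \ C)`, where `|K ∩ C| ≤ 1` and `K \ C` is a kernel of the
subdigraph induced by the vertices neither in `C` nor adjacent to `K ∩ C`. -/
theorem kernel_decompose_clique {V : Type*} [Fintype V]
    (G : SimpleGraph V) (A : V → V → Prop)
    (hsub : ∀ u v : V, A u v → G.Adj u v)
    (hor : ∀ u v : V, G.Adj u v → (A u v ↔ ¬ A v u))
    (C : Set V) (hclique : ∀ u ∈ C, ∀ v ∈ C, u ≠ v → G.Adj u v)
    (K : Set V)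
    (hKstable : ∀ u ∈ K, ∀ v ∈ K, ¬ G.Adj u v)
    (hKabsorb : ∀ u ∉ K, ∃ v ∈ K, A u v) :
    Set.ncard (K ∩ C) ≤ 1 ∧ K = (K ∩ C) ∪ (K \ C) ∧
      KernelOn G A {u : V | u ∉ C ∧ ∀ s ∈ K ∩ C, ¬ G.Adj u s} (K \ C) := by
  refine ⟨?_, ?_, ?_, ?_, ?_⟩
  · apply (Set.ncard_le_one_iff_eq (Set.toFinite _)).mpr
    rcases Set.eq_empty_or_nonempty (K ∩ C) with h | ⟨a, ha⟩
    · exact Or.inl h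
    · refine Or.inr ⟨a, Set.eq_singleton_iff_unique_mem.mpr ⟨ha, fun b hb => ?_⟩⟩
      by_contra hne
      exact hKstable b hb.1 a ha.1 (hclique b hb.2 a ha.2 hne)
  · simp [Set.inter_union_diff]
  · rintro u ⟨huK, huC⟩
    exact ⟨huC, fun s hs => hKstable u huK s hs.1⟩
  · exact fun u hu w hw => hKstable u hu.1 w hw.1
  · rintro u ⟨huC, huAdj⟩ hu
    have huK : u ∉ K := fun h => hu ⟨h, huC⟩
    obtain ⟨v, hvK, hA⟩ := hKabsorb u huK
    have hvC : v ∉ C := fun hvC => huAdj v ⟨hvK, hvC⟩ (hsub u v hA)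
    exact ⟨v, ⟨hvK, hvC⟩, hA⟩
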